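/- arXiv:1202.3303 — 2 statements merged into one kernel-verified Lean document; each statement's English description precedes it below -/
import Mathlib

section
/- Let M be a finite simple matroid of rank k on n elements whose dual matroid M* is also simple. Write χ_M(S,T) = Σ_{i=0}^n χ_i(T) S^i for the coboundary polynomial of M. Then the coboundary polynomial of M* satisfies the polynomial identity T^k · χ_{M*}(S,T) = Σ_{i=0}^n χ_i(T) · (S + T − 1)^i · (S − 1)^{n−i} (equivalently, χ_{M*}(S,T) = (S−1)^n T^{−k} χ_M((S+T−1)/(S−1), T)). -/
open Matroid Polynomial Finset
open scoped Classical

namespace PaperMatroid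

variable {α : Type*}

/-- The rank of a finset in a matroid on a finite type: the maximum size of an
independent subset. -/
noncomputable def mrk [Fintype α] (M : Matroid α) (x : Finset α) : ℕ :=
  (x.powerset.filter (fun (I : Finset α) => M.Indep (I : Set α))).sup Finset.card

/-- A circuit of a matroid: a minimal dependent set. -/
def IsCircuit (M : Matroid α) (C : Set α) : Prop :=
  M.Dep C ∧ ∀ ⦃D⦄, D ⊂ C → M.Indep D

/-- The girth of a matroid: the minimum size of a circuit. -/
noncomputable def girth (M : Matroid α) : ℕ :=
  sInf {n | ∃ C, IsCircuit M C ∧ C.ncard = n}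

/-- The cogirth of a matroid: the girth of the dual matroid, i.e. the minimum
size of a cocircuit. -/
noncomputable def cogirth (M : Matroid α) : ℕ := girth M✶

/-- The finset of (finsets corresponding to) flats of a matroid on a finite type. -/
noncomputable def flats [Fintype α] (M : Matroid α) : Finset (Finset α) :=
  Finset.univ.filter fun F => M.IsFlat ↑F

/-- The Möbius function of the lattice of flats of a matroid:
`μ(X,X) = 1`, `μ(X,Y) = -Σ_{X ⊆ Z ⊊ Y, Z a flat} μ(X,Z)` for `X ⊊ Y`, and `0` otherwise. -/
noncomputable def mob [Fintype α] (M : Matroid α) (X Y : Finset α) : ℤ :=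
  if X = Y then 1
  else if X ⊆ Y then
    -∑ Z ∈ ((flats M).filter fun Z => X ⊆ Z ∧ Z ⊂ Y).attach, mob M X Z.1
  else 0
termination_by Y.card
decreasing_by
  · have hZ := Z.2
    simp only [Finset.mem_filter] at hZ
    exact Finset.card_lt_card hZ.2.2

/-- The Möbius polynomial of a matroid, as a polynomial in `S` (the outer
variable) whose coefficients are polynomials in `T` (the inner variable):
`μ_M(S,T) = Σ_{x ∈ L} Σ_{x ⊆ y ∈ L} μ(x,y) S^{r(x)} T^{k - r(y)}`,
where `L` is the lattice of flats and `k` is the rank of `M`. -/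
noncomputable def mobiusPoly [Fintype α] (M : Matroid α) : Polynomial (Polynomial ℤ) :=
  ∑ x ∈ flats M, ∑ y ∈ (flats M).filter (fun y => x ⊆ y),
    mob M x y • (Polynomial.X ^ (mrk M x) *
      Polynomial.C (Polynomial.X ^ (mrk M Finset.univ - mrk M y)))

/-- The coboundary polynomial of a matroid, as a polynomial in `S` (the outer
variable) whose coefficients are polynomials in `T` (the inner variable):
`χ_M(S,T) = Σ_{x ∈ L} Σ_{x ⊆ y ∈ L} μ(x,y) S^{|x|} T^{k - r(y)}`,
where `L` is the lattice of flats, `|x|` is the number of ground-set elements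
of the flat `x`, and `k` is the rank of `M`. -/
noncomputable def cobPoly [Fintype α] (M : Matroid α) : Polynomial (Polynomial ℤ) :=
  ∑ x ∈ flats M, ∑ y ∈ (flats M).filter (fun y => x ⊆ y),
    mob M x y • (Polynomial.X ^ x.card *
      Polynomial.C (Polynomial.X ^ (mrk M Finset.univ - mrk M y)))

/-! Writing `S^{|x|} = Σ_{A ⊆ x} (S-1)^{|A|}` and grouping the sets `A` by their closure, Möbius
inversion on the lattice of flats turns the coboundary polynomial into the corank expansion
`χ_M(S,T) = Σ_{A ⊆ E} (S-1)^{|A|} T^{k-r(A)}`. In the dual, the corank of `E \ A` is the nullity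
`|A| - r(A)` of `A`, so complementing `A` gives
`T^k χ_{M*}(S,T) = Σ_A T^{k-r(A)} T^{|A|} (S-1)^{n-|A|}`. On the other side, the homogeneous
substitution `S^i ↦ (S+T-1)^i (S-1)^{n-i}` sends `(S-1)^a` to `T^a (S-1)^{n-a}`. -/

section Substitution

lemma sum_range_algebraMap_coeff_X_add_C_pow_mul {R A : Type*} [CommSemiring R] [CommSemiring A]
    [Algebra R A] (r : R) (Q P : A) {a n : ℕ} (han : a ≤ n) :
    ∑ i ∈ Finset.range (n + 1), algebraMap R A (((X + C r) ^ a).coeff i) * Q ^ i * P ^ (n - i)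
      = (Q + algebraMap R A r * P) ^ a * P ^ (n - a) := by
  rw [(Commute.all Q _).add_pow, Finset.sum_mul,
    ← Finset.sum_subset (Finset.range_subset_range.2 (by omega : a + 1 ≤ n + 1))]
  · refine Finset.sum_congr rfl fun i hi => ?_
    have hia : i ≤ a := Nat.lt_succ_iff.1 (Finset.mem_range.1 hi)
    rw [coeff_X_add_C_pow, show n - i = (a - i) + (n - a) by omega]
    simp only [map_mul, map_pow, map_natCast]
    ring
  · intro i _ hi
    rw [coeff_X_add_C_pow, Nat.choose_eq_zero_of_lt (by simpa using hi)]
    simp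

lemma sum_range_algebraMap_coeff_sum_X_add_C_pow_mul_C {R A ι : Type*} [CommSemiring R]
    [CommSemiring A] [Algebra R A] (s : Finset ι) (d : ι → ℕ) (c : ι → R) (r : R) (Q P : A)
    {n : ℕ} (hd : ∀ i ∈ s, d i ≤ n) :
    ∑ j ∈ Finset.range (n + 1),
        algebraMap R A ((∑ i ∈ s, (X + C r) ^ d i * C (c i)).coeff j) * Q ^ j * P ^ (n - j)
      = ∑ i ∈ s, algebraMap R A (c i) * ((Q + algebraMap R A r * P) ^ d i * P ^ (n - d i)) := by
  simp only [finsetSum_coeff, coeff_mul_C, map_sum, map_mul, Finset.sum_mul]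
  rw [Finset.sum_comm]
  refine Finset.sum_congr rfl fun i hi => ?_
  rw [← sum_range_algebraMap_coeff_X_add_C_pow_mul r Q P (hd i hi), Finset.mul_sum]
  exact Finset.sum_congr rfl fun j _ => by ring

end Substitution

section Rank
variable [Fintype α]

lemma mrk_eq_eRk (M : Matroid α) (A : Finset α) : (mrk M A : ℕ∞) = M.eRk A := by
  refine le_antisymm ?_ (eRk_le_iff.2 fun I hIA hI => ?_)
  · obtain ⟨J, hJ, hJmax⟩ := Finset.exists_mem_eq_sup
      (A.powerset.filter fun I : Finset α => M.Indep ↑I) ⟨∅, by simp⟩ Finset.card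
    simp only [Finset.mem_filter, Finset.mem_powerset] at hJ
    rw [mrk, hJmax, ← Set.encard_coe_eq_coe_finsetCard]
    exact hJ.2.encard_le_eRk_of_subset (by exact_mod_cast hJ.1)
  · lift I to Finset α using A.finite_toSet.subset hIA
    rw [Set.encard_coe_eq_coe_finsetCard, Nat.cast_le]
    exact Finset.le_sup (f := Finset.card) (by simpa using And.intro hIA hI)

variable {M : Matroid α}

lemma mrk_mono {A B : Finset α} (h : A ⊆ B) : mrk M A ≤ mrk M B :=
  Finset.sup_mono (Finset.filter_subset_filter _ (Finset.powerset_mono.mpr h))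

lemma mrk_le_card (M : Matroid α) (A : Finset α) : mrk M A ≤ A.card :=
  Finset.sup_le fun _ hI => Finset.card_le_card (Finset.mem_powerset.1 (Finset.mem_filter.1 hI).1)

lemma mrk_dual_add_mrk_univ (hE : M.E = Set.univ) (A : Finset α) :
    mrk M✶ A + mrk M Finset.univ = mrk M Aᶜ + A.card := by
  apply Nat.cast_injective (R := ℕ∞)
  push_cast
  rw [mrk_eq_eRk, mrk_eq_eRk, mrk_eq_eRk, Finset.coe_univ, eRk_univ_eq,
    M.eRk_dual_add_eRank _ (hE ▸ Set.subset_univ _), hE, ← Set.compl_eq_univ_sdiff,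
    Finset.coe_compl, Set.encard_coe_eq_coe_finsetCard]

lemma mrk_dual_univ_sub_mrk_dual_compl (hE : M.E = Set.univ) (A : Finset α) :
    mrk M✶ Finset.univ - mrk M✶ Aᶜ = A.card - mrk M A := by
  have hA := mrk_dual_add_mrk_univ hE Aᶜ
  have huniv := mrk_dual_add_mrk_univ hE Finset.univ
  have hcard := A.card_add_card_compl
  rw [compl_compl] at hA
  rw [Finset.compl_univ, Finset.card_univ] at huniv
  have h0 : mrk M (∅ : Finset α) = 0 := Nat.le_zero.1 (mrk_le_card M ∅)
  omega

end Rank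

section Closure
variable [Fintype α]

noncomputable def closureFinset (M : Matroid α) (A : Finset α) : Finset α :=
  (M.closure A).toFinset

lemma coe_closureFinset (M : Matroid α) (A : Finset α) :
    (closureFinset M A : Set α) = M.closure A :=
  Set.coe_toFinset _

lemma closureFinset_mem_flats (M : Matroid α) (A : Finset α) : closureFinset M A ∈ flats M := by
  simp [flats, coe_closureFinset]

lemma mrk_closureFinset (M : Matroid α) (A : Finset α) : mrk M (closureFinset M A) = mrk M A := by
  apply Nat.cast_injective (R := ℕ∞)
  rw [mrk_eq_eRk, mrk_eq_eRk, coe_closureFinset, eRk_closure_eq]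

lemma closureFinset_subset_iff {M : Matroid α} (hE : M.E = Set.univ) {A F : Finset α}
    (hF : F ∈ flats M) : closureFinset M A ⊆ F ↔ A ⊆ F := by
  rw [← Finset.coe_subset, ← Finset.coe_subset, coe_closureFinset]
  refine ⟨(M.subset_closure _ (hE ▸ Set.subset_univ _)).trans, fun h => ?_⟩
  simpa [(Finset.mem_filter.1 hF).2.closure] using M.closure_subset_closure h

end Closure

section Moebius
variable [Fintype α] {M : Matroid α}

lemma mob_eq_mu (a b : flats M) : mob M a b = IncidenceAlgebra.mu ℤ a b := by
  obtain ⟨b, hb⟩ := b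
  induction b using Finset.strongInduction with
  | H b ih =>
  rw [mob, IncidenceAlgebra.mu_apply]
  simp only [Subtype.ext_iff]
  split_ifs with hab hab'
  · rfl
  · have hIco : Finset.Ico a ⟨b, hb⟩ = (Finset.Ico a.1 b).subtype (· ∈ flats M) := rfl
    have hmu : ∀ z ∈ Finset.Ico a ⟨b, hb⟩, IncidenceAlgebra.mu ℤ a z = mob M a z :=
      fun z hz => (ih z.1 (Finset.mem_Ico.1 (Finset.mem_subtype.1 (hIco ▸ hz))).2 z.2).symm
    rw [Finset.sum_attach _ (mob M a), Finset.sum_congr rfl hmu, hIco,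
      Finset.sum_subtype_eq_sum_filter]
    congr 2
    ext z
    simp [and_comm]
  · rw [Finset.Ico_eq_empty fun h : a < ⟨b, hb⟩ => hab' h.le, Finset.sum_empty, neg_zero]

lemma sum_mob_left {a b : Finset α} (ha : a ∈ flats M) (hb : b ∈ flats M) :
    ∑ x ∈ (flats M).filter (fun x => a ⊆ x ∧ x ⊆ b), mob M x b
      = if a = b then 1 else 0 := by
  have h := IncidenceAlgebra.sum_Icc_mu_left (𝕜 := ℤ) (⟨a, ha⟩ : flats M) ⟨b, hb⟩
  have hIcc : Finset.Icc (⟨a, ha⟩ : flats M) ⟨b, hb⟩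
      = (Finset.Icc a b).subtype (· ∈ flats M) := rfl
  simp only [hIcc, Subtype.mk.injEq, ← mob_eq_mu] at h
  rw [← h, Finset.sum_subtype_eq_sum_filter (fun x => mob M x b)]
  congr 1
  ext x
  simp [and_comm]

lemma sum_mob_smul_add_one_pow {R : Type*} [CommRing R] (hE : M.E = Set.univ) (s : R)
    {y : Finset α} (hy : y ∈ flats M) :
    ∑ x ∈ (flats M).filter (· ⊆ y), mob M x y • (s + 1) ^ x.card
      = ∑ A ∈ Finset.univ.filter (closureFinset M · = y), s ^ A.card := by
  have hpow (x : Finset α) :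
      (s + 1) ^ x.card = ∑ A, if A ⊆ x then s ^ A.card else 0 := by
    simp [← Finset.sum_pow_mul_eq_add_pow, ← Finset.sum_filter, Finset.filter_subset_univ]
  calc ∑ x ∈ (flats M).filter (· ⊆ y), mob M x y • (s + 1) ^ x.card
      = ∑ A, ∑ x ∈ (flats M).filter (· ⊆ y),
          if A ⊆ x then mob M x y • s ^ A.card else 0 := by
        simp_rw [hpow, Finset.smul_sum, smul_ite, smul_zero]
        exact Finset.sum_comm
    _ = ∑ A, (if closureFinset M A = y then 1 else 0 : ℤ) • s ^ A.card := by
        refine Finset.sum_congr rfl fun A _ => ?_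
        rw [← Finset.sum_filter, ← Finset.sum_smul, Finset.filter_filter,
          ← sum_mob_left (closureFinset_mem_flats M A) hy]
        congr 2
        exact Finset.filter_congr fun x hx => by rw [closureFinset_subset_iff hE hx, and_comm]
    _ = _ := by simp [Finset.sum_filter]

end Moebius

section CoboundaryPolynomial
variable [Fintype α] {M : Matroid α}

lemma cobPoly_eq_sum (hE : M.E = Set.univ) :
    cobPoly M = ∑ A : Finset α, (X - 1 : ℤ[X][X]) ^ A.card *
      C (X ^ (mrk M Finset.univ - mrk M A)) := by
  set T : Finset α → ℤ[X][X] := fun y => C (X ^ (mrk M Finset.univ - mrk M y))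
  calc cobPoly M
      = ∑ y ∈ flats M,
          (∑ x ∈ (flats M).filter (· ⊆ y), mob M x y • (X - 1 + 1) ^ x.card) * T y := by
        rw [cobPoly, Finset.sum_comm' (t' := flats M) (s' := fun y => (flats M).filter (· ⊆ y))
          fun x y => by simp only [Finset.mem_filter]; tauto]
        simp_rw [Finset.sum_mul, smul_mul_assoc, sub_add_cancel]
        rfl
    _ = ∑ y ∈ flats M, ∑ A ∈ Finset.univ.filter (closureFinset M · = y),
          (X - 1) ^ A.card * T y := by
        refine Finset.sum_congr rfl fun y hy => ?_
        rw [sum_mob_smul_add_one_pow hE _ hy, Finset.sum_mul]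
    _ = ∑ y ∈ flats M, ∑ A ∈ Finset.univ.filter (closureFinset M · = y),
          (X - 1) ^ A.card * T (closureFinset M A) := by
        refine Finset.sum_congr rfl fun y _ => Finset.sum_congr rfl fun A hA => ?_
        rw [(Finset.mem_filter.1 hA).2]
    _ = _ := by
        rw [Finset.sum_fiberwise_of_maps_to fun A _ => closureFinset_mem_flats M A]
        simp only [T, mrk_closureFinset]

lemma sum_range_C_coeff_cobPoly_mul (hE : M.E = Set.univ) {n : ℕ} (hn : Fintype.card α ≤ n) :
    ∑ i ∈ Finset.range (n + 1),
        C ((cobPoly M).coeff i) * (X + C X - 1) ^ i * (X - 1) ^ (n - i)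
      = ∑ B : Finset α, C (X ^ (mrk M Finset.univ - mrk M B)) *
          ((C X : ℤ[X][X]) ^ B.card * (X - 1) ^ (n - B.card)) := by
  have hprimal := cobPoly_eq_sum hE
  rw [show (X - 1 : ℤ[X][X]) = X + C (-1) by simp [sub_eq_add_neg]] at hprimal
  have hsubst := sum_range_algebraMap_coeff_sum_X_add_C_pow_mul_C Finset.univ Finset.card
    (fun B => (X : ℤ[X]) ^ (mrk M Finset.univ - mrk M B)) (-1) (X + C X - 1 : ℤ[X][X]) (X - 1)
    fun B _ => B.card_le_univ.trans hn
  simp only [algebraMap_eq, ← hprimal] at hsubst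
  rw [hsubst, show X + C X - 1 + C (-1) * (X - 1) = (C X : ℤ[X][X]) by simp; ring]

lemma C_X_pow_mul_cobPoly_dual (hE : M.E = Set.univ) :
    C (X ^ mrk M Finset.univ) * cobPoly M✶
      = ∑ B : Finset α, C (X ^ (mrk M Finset.univ - mrk M B)) *
          ((C X : ℤ[X][X]) ^ B.card * (X - 1) ^ (Fintype.card α - B.card)) := by
  rw [cobPoly_eq_sum (M := M✶) hE, Finset.mul_sum, ← Equiv.sum_comp (compl_involutive.toPerm _)]
  refine Finset.sum_congr rfl fun B _ => ?_
  have hB : mrk M B ≤ B.card := mrk_le_card M B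
  have hBk : mrk M B ≤ mrk M Finset.univ := mrk_mono B.subset_univ
  have hexp : C (X ^ mrk M Finset.univ) * C (X ^ (B.card - mrk M B))
      = C (X ^ (mrk M Finset.univ - mrk M B)) * (C X : ℤ[X][X]) ^ B.card := by
    rw [← C_pow, ← C_mul, ← C_mul, ← pow_add, ← pow_add]
    congr 2
    omega
  simp only [Function.Involutive.coe_toPerm, Finset.card_compl,
    mrk_dual_univ_sub_mrk_dual_compl hE B]
  linear_combination (X - 1) ^ (Fintype.card α - B.card) * hexp

end CoboundaryPolynomial

theorem cobPoly_dual_general {α : Type*} [Fintype α] (M : Matroid α)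
    (hE : M.E = Set.univ) (n k : ℕ) (hn : n = Fintype.card α)
    (hk : k = mrk M Finset.univ) :
    Polynomial.C (Polynomial.X ^ k) * cobPoly M✶ =
      ∑ i ∈ Finset.range (n + 1),
        Polynomial.C ((cobPoly M).coeff i) *
          (Polynomial.X + Polynomial.C Polynomial.X - 1) ^ i *
          (Polynomial.X - 1) ^ (n - i) := by
  subst hn hk
  rw [C_X_pow_mul_cobPoly_dual hE, sum_range_C_coeff_cobPoly_mul hE le_rfl]

/-- For a finite simple matroid `M` of rank `k` on `n` elements
with simple dual `M✶`, the coboundary polynomials satisfy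
`T^k · χ_{M✶}(S,T) = Σ_{i=0}^n χ_i(T) (S + T - 1)^i (S - 1)^(n-i)`,
i.e. `χ_{M✶}(S,T) = (S-1)^n T^(-k) χ_M((S+T-1)/(S-1), T)`.
Here `S` is the outer variable `Polynomial.X` and `T` is the inner variable
`Polynomial.C Polynomial.X`. -/
theorem cobPoly_dual {α : Type*} [Fintype α] (M : Matroid α)
    (hE : M.E = Set.univ) (n k : ℕ) (hn : n = Fintype.card α)
    (hk : k = mrk M Finset.univ)
    (hsimple : 2 < girth M) (hdualsimple : 2 < girth M✶) :
    Polynomial.C (Polynomial.X ^ k) * cobPoly M✶ =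
      ∑ i ∈ Finset.range (n + 1),
        Polynomial.C ((cobPoly M).coeff i) *
          (Polynomial.X + Polynomial.C Polynomial.X - 1) ^ i *
          (Polynomial.X - 1) ^ (n - i) :=
  cobPoly_dual_general M hE n k hn hk

end PaperMatroid
end

section
/- Let n and e be integers with 2 < e and e ≤ n, and let U be the uniform matroid of rank n − e + 1 on n elements. Write its coboundary polynomial as χ_U(S,T) = Σ_{j=0}^n χ_j(T) S^j. Then χ_n(T) = 1, χ_j(T) = 0 for n − e < j < n, and for 0 ≤ j ≤ n − e, χ_j(T) = C(n, j) · (T − 1) · Σ_{t=0}^{n−j−e} (−1)^t C(n−j−1, t) T^{n−j−e−t}, where C(·,·) denotes binomial coefficients. -/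
open Matroid Polynomial Finset
open scoped Classical

namespace PaperMatroid

variable {α : Type*}

/-- The uniform matroid of rank `m` on `Fin n`: the independent sets are
exactly the subsets of size at most `m`. -/
noncomputable def unif (n m : ℕ) : Matroid (Fin n) :=
  (IndepMatroid.ofFinite (Set.finite_univ (α := Fin n))
    (fun I => I.ncard ≤ m)
    (by simp)
    (fun I J hJ hIJ => le_trans (Set.ncard_le_ncard hIJ (Set.toFinite J)) hJ)
    (fun I J hI hJ hIJ => by
      obtain ⟨e, heJ, heI⟩ : ∃ e ∈ J, e ∉ I := by
        by_contra h
        push_neg at h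
        exact absurd (Set.ncard_le_ncard h (Set.toFinite I)) (not_le.mpr hIJ)
      refine ⟨e, heJ, heI, ?_⟩
      show (insert e I).ncard ≤ m
      rw [Set.ncard_insert_of_notMem heI (Set.toFinite I)]
      exact le_trans (Nat.succ_le_of_lt hIJ) hJ
    )
    (fun I _ => Set.subset_univ I)).matroid

/-!
The flats of the uniform matroid of rank `m` are the sets of size `< m` together with the ground
set, so below rank `m` the lattice of flats is Boolean and `μ(x, y) = (-1) ^ (|y| - |x|)`. Since
`Σ_{y ⊇ x} μ(x, y) = 0`, the part of `χ_{|x|}` coming from a flat `x` of size `< m` is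
`Σ_{x ⊆ y} (-1) ^ (|y| - |x|) (T ^ (m - |y|) - 1)`, a sum over all sets `y ⊇ x` in which the
non-flats and the ground set contribute `0`. Counting the `y` by size gives an alternating binomial
sum, which factors as `(T - 1) · Σ_t (-1) ^ t C(n - |x| - 1, t) T ^ (m - 1 - |x| - t)` because the
partial alternating sums of `C(N + 1, i)` are `±C(N, d)`.
-/

theorem sum_Icc_finset_apply_card {γ β : Type*} [DecidableEq γ] [AddCommMonoid β]
    {X Y : Finset γ} (hXY : X ⊆ Y) (f : ℕ → β) :
    ∑ Z ∈ Icc X Y, f #Z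
      = ∑ i ∈ range (#(Y \ X) + 1), (#(Y \ X)).choose i • f (#X + i) := by
  have hdisj : ∀ W ∈ (Y \ X).powerset, Disjoint X W := fun W hW =>
    disjoint_of_subset_right (mem_powerset.1 hW) disjoint_sdiff
  rw [Icc_eq_image_powerset hXY, sum_image, ← sum_powerset_apply_card]
  · exact sum_congr rfl fun W hW => by rw [card_union_of_disjoint (hdisj W hW)]
  · intro W hW W' hW' h
    simpa [union_sdiff_cancel_left (hdisj W hW), union_sdiff_cancel_left (hdisj W' hW')]
      using congrArg (· \ X) h

theorem sum_Icc_finset_neg_one_pow {γ : Type*} [DecidableEq γ] {X Y : Finset γ}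
    (hXY : X ⊂ Y) : ∑ Z ∈ Icc X Y, (-1 : ℤ) ^ (#Z - #X) = 0 := by
  rw [sum_Icc_finset_apply_card hXY.subset fun k => (-1 : ℤ) ^ (k - #X)]
  simp only [Nat.add_sub_cancel_left, nsmul_eq_mul, mul_comm]
  exact Int.alternating_sum_range_choose_of_ne (card_ne_zero.2 (sdiff_nonempty.2 hXY.not_subset))

theorem sum_neg_one_pow_choose_mul_pow_sub_one {R : Type*} [CommRing R] (x : R) (N d : ℕ) :
    ∑ i ∈ range (d + 1), (-1 : R) ^ i * ((N + 1).choose i : R) * (x ^ (d + 1 - i) - 1)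
      = (x - 1) * ∑ t ∈ range (d + 1), (-1 : R) ^ t * (N.choose t : R) * x ^ (d - t) := by
  induction d with
  | zero => simp [mul_comm]
  | succ d ih =>
    have hpartial : ∑ i ∈ range (d + 2), (-1 : R) ^ i * ((N + 1).choose i : R)
        = (-1) ^ (d + 1) * (N.choose (d + 1) : R) := by
      simpa using congrArg (Int.cast : ℤ → R)
        (Int.alternating_sum_range_choose_eq_choose (n := N) (m := d + 1))
    have hsplit : ∀ i ∈ range (d + 2),
        (-1 : R) ^ i * ((N + 1).choose i : R) * (x ^ (d + 2 - i) - 1)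
          = x * ((-1 : R) ^ i * ((N + 1).choose i : R) * (x ^ (d + 1 - i) - 1))
            + (x - 1) * ((-1 : R) ^ i * ((N + 1).choose i : R)) := by
      intro i hi
      rw [show d + 2 - i = d + 1 - i + 1 by grind, pow_succ]
      ring
    have hshift : ∀ t ∈ range (d + 1), (-1 : R) ^ t * (N.choose t : R) * x ^ (d + 1 - t)
        = x * ((-1 : R) ^ t * (N.choose t : R) * x ^ (d - t)) := by
      intro t ht
      rw [show d + 1 - t = d - t + 1 by grind, pow_succ]
      ring
    rw [sum_congr rfl hsplit, sum_add_distrib, ← mul_sum, ← mul_sum, hpartial,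
      sum_range_succ _ (d + 1), ih, sum_range_succ _ (d + 1), sum_congr rfl hshift, ← mul_sum]
    simp only [Nat.sub_self, pow_zero, sub_self, mul_zero, add_zero]
    ring

section Mobius

variable [Fintype α]

theorem mob_self (M : Matroid α) (X : Finset α) : mob M X X = 1 := by
  rw [mob, if_pos rfl]

variable [DecidableEq α]

theorem mob_of_ne (M : Matroid α) {X Y : Finset α} (hne : X ≠ Y) (hXY : X ⊆ Y) :
    mob M X Y = -∑ Z ∈ (flats M).filter (fun Z => X ⊆ Z ∧ Z ⊂ Y), mob M X Z := by
  rw [mob, if_neg hne, if_pos hXY, sum_attach _ (mob M X)]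
  congr!

theorem sum_mob_eq_zero (M : Matroid α) (hE : M.E = Set.univ) {X : Finset α} (hX : X ≠ univ) :
    ∑ Y ∈ (flats M).filter (fun Y => X ⊆ Y), mob M X Y = 0 := by
  have huniv : univ ∈ (flats M).filter (fun Y => X ⊆ Y) := by
    rw [flats, mem_filter, mem_filter, coe_univ, ← hE]
    exact ⟨⟨mem_univ _, M.ground_isFlat⟩, subset_univ X⟩
  rw [← add_sum_erase _ _ huniv, mob_of_ne M hX (subset_univ X), neg_add_eq_zero]
  congr 1
  ext Z
  simp only [mem_erase, mem_filter, ssubset_univ_iff]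
  tauto

theorem coeff_cobPoly (M : Matroid α) (j : ℕ) :
    (cobPoly M).coeff j = ∑ x ∈ (flats M).filter (fun x => #x = j),
      ∑ y ∈ (flats M).filter (fun y => x ⊆ y),
        mob M x y • (X : ℤ[X]) ^ (mrk M univ - mrk M y) := by
  rw [cobPoly, finsetSum_coeff, sum_filter]
  refine sum_congr rfl fun x _ => ?_
  rw [finsetSum_coeff]
  split_ifs with hx
  · refine sum_congr (by congr!) fun y _ => ?_
    rw [coeff_smul, coeff_mul_C, coeff_X_pow, if_pos hx.symm, one_mul]
  · refine sum_eq_zero fun y _ => ?_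
    rw [coeff_smul, coeff_mul_C, coeff_X_pow, if_neg (Ne.symm hx), zero_mul, smul_zero]

end Mobius

section Uniform

variable {n m : ℕ}

theorem unif_indep_iff {I : Set (Fin n)} : (unif n m).Indep I ↔ I.ncard ≤ m := by
  rw [unif, IndepMatroid.matroid_indep_iff, IndepMatroid.ofFinite_indep]

theorem unif_ground : (unif n m).E = Set.univ := rfl

theorem mrk_unif (x : Finset (Fin n)) : mrk (unif n m) x = min #x m := by
  apply le_antisymm
  · refine Finset.sup_le fun I hI => ?_
    rw [mem_filter, mem_powerset, unif_indep_iff, Set.ncard_coe_finset] at hI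
    exact le_min (card_le_card hI.1) hI.2
  · obtain ⟨I, hIx, hI⟩ := exists_subset_card_eq (min_le_left #x m)
    rw [← hI]
    refine le_sup (f := Finset.card) (mem_filter.2 ⟨mem_powerset.2 hIx, ?_⟩)
    rw [unif_indep_iff, Set.ncard_coe_finset, hI]
    exact min_le_right _ _

theorem unif_isFlat_iff {F : Finset (Fin n)} :
    (unif n m).IsFlat F ↔ #F < m ∨ F = univ := by
  constructor
  · intro hF
    refine or_iff_not_imp_left.2 fun hmF => ?_
    obtain ⟨I, hIF, hI⟩ := exists_subset_card_eq (not_lt.1 hmF)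
    have hIindep : (unif n m).Indep I := by rw [unif_indep_iff, Set.ncard_coe_finset, hI]
    have hspan : (unif n m).closure I = Set.univ := by
      refine Set.eq_univ_of_forall fun a => hIindep.mem_closure_iff.2 ?_
      refine or_iff_not_imp_right.2 fun haI => ⟨fun hindep => ?_, Set.subset_univ _⟩
      rw [unif_indep_iff, ← coe_insert, Set.ncard_coe_finset, card_insert_of_notMem haI] at hindep
      omega
    have hsub := (unif n m).closure_subset_closure (coe_subset.2 hIF)
    rwa [hspan, hF.closure, Set.univ_subset_iff, coe_eq_univ] at hsub
  · rintro (hFm | rfl)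
    · have hFindep : (unif n m).Indep F := by rw [unif_indep_iff, Set.ncard_coe_finset]; omega
      refine isFlat_iff_closure_eq.2 (subset_antisymm (fun a ha => ?_) (subset_closure _ _))
      refine (hFindep.mem_closure_iff.1 ha).resolve_left fun hdep => hdep.not_indep ?_
      rw [unif_indep_iff]
      exact (Set.ncard_insert_le a _).trans (by rw [Set.ncard_coe_finset]; omega)
    · rw [coe_univ]
      exact (unif n m).ground_isFlat

theorem mem_flats_unif {F : Finset (Fin n)} : F ∈ flats (unif n m) ↔ #F < m ∨ F = univ := by
  rw [flats, mem_filter, unif_isFlat_iff, and_iff_right (mem_univ F)]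

theorem mob_unif_of_card_lt {X Y : Finset (Fin n)} (hXY : X ⊆ Y) (hY : #Y < m) :
    mob (unif n m) X Y = (-1) ^ (#Y - #X) := by
  induction Y using Finset.strongInduction with
  | H Y ih =>
  obtain rfl | hne := eq_or_ne X Y
  · rw [mob_self, Nat.sub_self, pow_zero]
  have hbetween : (flats (unif n m)).filter (fun Z => X ⊆ Z ∧ Z ⊂ Y) = Ico X Y := by
    ext Z
    simp only [mem_filter, mem_flats_unif, mem_Ico, and_iff_right_iff_imp, and_imp]
    exact fun _ hZY => Or.inl ((card_lt_card hZY).trans hY)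
  have hIcc := sum_Icc_finset_neg_one_pow (ssubset_of_subset_of_ne hXY hne)
  rw [← Ico_insert_right hXY, sum_insert right_notMem_Ico] at hIcc
  rw [mob_of_ne _ hne hXY, hbetween, eq_neg_of_add_eq_zero_left hIcc]
  refine congrArg Neg.neg (sum_congr rfl fun Z hZ => ?_)
  rw [mem_Ico] at hZ
  exact ih Z hZ.2 hZ.1 ((card_lt_card hZ.2).trans hY)

theorem sum_mob_unif_smul_X_pow {x : Finset (Fin n)} {d : ℕ} (hmn : m ≤ n)
    (hd : #x + d + 1 = m) :
    ∑ y ∈ (flats (unif n m)).filter (fun y => x ⊆ y),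
        mob (unif n m) x y • (X : ℤ[X]) ^ (mrk (unif n m) univ - mrk (unif n m) y)
      = (X - 1) * ∑ t ∈ range (d + 1),
          (-1) ^ t * ((n - #x - 1).choose t : ℤ[X]) * X ^ (d - t) := by
  have hx : x ≠ univ := by
    rintro rfl
    rw [card_univ, Fintype.card_fin] at hd
    omega
  have hcompl : #(univ \ x) = n - #x - 1 + 1 := by
    rw [card_sdiff_of_subset (subset_univ x), card_univ, Fintype.card_fin]
    omega
  calc _ = ∑ y ∈ (flats (unif n m)).filter (fun y => x ⊆ y),
          mob (unif n m) x y • ((X : ℤ[X]) ^ (m - mrk (unif n m) y) - 1) := by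
        rw [mrk_unif univ, card_univ, Fintype.card_fin, min_eq_right hmn]
        simp only [smul_sub, sum_sub_distrib, ← sum_smul, sum_mob_eq_zero _ unif_ground hx,
          zero_smul, sub_zero]
    -- a non-flat `y ⊇ x` has `m ≤ #y`, so its term vanishes
    _ = ∑ y ∈ Icc x univ, (-1 : ℤ) ^ (#y - #x) • ((X : ℤ[X]) ^ (m - #y) - 1) := by
        refine sum_subset_zero_on_sdiff (fun y hy => ?_) (fun y hy => ?_) (fun y hy => ?_)
        · exact mem_Icc.2 ⟨(mem_filter.1 hy).2, subset_univ y⟩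
        · simp only [mem_sdiff, mem_filter, mem_flats_unif, mem_Icc] at hy
          have hmy : m ≤ #y := not_lt.1 fun hym => hy.2 ⟨Or.inl hym, hy.1.1⟩
          rw [Nat.sub_eq_zero_of_le hmy, pow_zero, sub_self, smul_zero]
        · rw [mem_filter, mem_flats_unif] at hy
          rw [mrk_unif]
          by_cases hym : #y < m
          · rw [mob_unif_of_card_lt hy.2 hym, min_eq_left hym.le]
          · rw [min_eq_right (not_lt.1 hym), Nat.sub_eq_zero_of_le (not_lt.1 hym), Nat.sub_self,
              pow_zero, sub_self, smul_zero, smul_zero]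
    _ = ∑ i ∈ range (n - #x - 1 + 1 + 1), (n - #x - 1 + 1).choose i •
          ((-1 : ℤ) ^ i • ((X : ℤ[X]) ^ (m - (#x + i)) - 1)) := by
        rw [sum_Icc_finset_apply_card (subset_univ x)
          fun k => (-1 : ℤ) ^ (k - #x) • ((X : ℤ[X]) ^ (m - k) - 1), hcompl]
        simp only [Nat.add_sub_cancel_left]
    _ = ∑ i ∈ range (d + 1),
          (-1 : ℤ[X]) ^ i * ((n - #x - 1 + 1).choose i : ℤ[X]) * (X ^ (d + 1 - i) - 1) := by
        refine (sum_subset (range_subset_range.2 (by omega)) fun i _ hi => ?_).symm.trans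
          (sum_congr rfl fun i _ => ?_)
        · rw [mem_range, not_lt] at hi
          rw [Nat.sub_eq_zero_of_le (show m ≤ #x + i by omega), pow_zero, sub_self, smul_zero,
            smul_zero]
        · rw [show m - (#x + i) = d + 1 - i by omega, nsmul_eq_mul, zsmul_eq_mul]
          push_cast
          ring
    _ = _ := sum_neg_one_pow_choose_mul_pow_sub_one X (n - #x - 1) d

theorem coeff_cobPoly_unif_self : (cobPoly (unif n m)).coeff n = 1 := by
  have huniv : univ ∈ flats (unif n m) := mem_flats_unif.2 (Or.inr rfl)
  have hfull : (flats (unif n m)).filter (fun x => #x = n) = {univ} := by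
    ext x
    rw [mem_filter, mem_singleton]
    constructor
    · rintro ⟨-, hx⟩
      rwa [← card_eq_iff_eq_univ, Fintype.card_fin]
    · rintro rfl
      exact ⟨huniv, by rw [card_univ, Fintype.card_fin]⟩
  have hup : (flats (unif n m)).filter (fun y => univ ⊆ y) = {univ} := by
    ext y
    rw [mem_filter, mem_singleton, univ_subset_iff]
    exact ⟨And.right, fun hy => ⟨hy ▸ huniv, hy⟩⟩
  rw [coeff_cobPoly, hfull, sum_singleton, hup, sum_singleton, mob_self, Nat.sub_self, pow_zero,
    one_smul]

theorem coeff_cobPoly_unif_of_le_of_lt {j : ℕ} (hmj : m ≤ j) (hjn : j < n) :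
    (cobPoly (unif n m)).coeff j = 0 := by
  rw [coeff_cobPoly, filter_eq_empty_iff.2, sum_empty]
  intro x hx hxj
  rcases mem_flats_unif.1 hx with hxm | rfl
  · omega
  · rw [card_univ, Fintype.card_fin] at hxj
    omega

theorem coeff_cobPoly_unif_of_lt {j d : ℕ} (hmn : m ≤ n) (hd : j + d + 1 = m) :
    (cobPoly (unif n m)).coeff j = (n.choose j : ℤ[X]) * ((X - 1) * ∑ t ∈ range (d + 1),
      (-1) ^ t * ((n - j - 1).choose t : ℤ[X]) * X ^ (d - t)) := by
  have hsmall : (flats (unif n m)).filter (fun x => #x = j) = powersetCard j univ := by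
    ext x
    rw [mem_filter, mem_flats_unif, mem_powersetCard_univ]
    exact ⟨And.right, fun hx => ⟨Or.inl (by omega), hx⟩⟩
  rw [coeff_cobPoly, hsmall, sum_congr rfl fun x hx => ?_, sum_const, card_powersetCard,
    card_univ, Fintype.card_fin, nsmul_eq_mul]
  rw [mem_powersetCard_univ] at hx
  rw [sum_mob_unif_smul_X_pow (d := d) hmn (by omega), hx]

end Uniform

/-- Let `2 < e ≤ n` and let `U` be the uniform matroid of rank
`n - e + 1` on `n` elements. Writing `χ_U(S,T) = Σ_{j=0}^n χ_j(T) S^j`: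
`χ_n(T) = 1`, `χ_j(T) = 0` for `n - e < j < n`, and for `0 ≤ j ≤ n - e`,
`χ_j(T) = C(n,j) (T-1) Σ_{t=0}^{n-j-e} (-1)^t C(n-j-1, t) T^(n-j-e-t)`. -/
theorem cobPoly_unif (n e : ℕ) (h2 : 2 < e) (hen : e ≤ n) :
    (cobPoly (unif n (n - e + 1))).coeff n = 1 ∧
    (∀ j : ℕ, n - e < j → j < n → (cobPoly (unif n (n - e + 1))).coeff j = 0) ∧
    (∀ j : ℕ, j ≤ n - e →
      (cobPoly (unif n (n - e + 1))).coeff j =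
        (n.choose j : Polynomial ℤ) * ((Polynomial.X - 1) *
          ∑ t ∈ Finset.range (n - j - e + 1),
            (-1 : Polynomial ℤ) ^ t * ((n - j - 1).choose t : Polynomial ℤ) *
              Polynomial.X ^ (n - j - e - t))) :=
  ⟨coeff_cobPoly_unif_self,
    fun _ hj hjn => coeff_cobPoly_unif_of_le_of_lt (by omega) hjn,
    fun _ hj => coeff_cobPoly_unif_of_lt (by omega) (by omega)⟩

end PaperMatroid
end
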